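/- arXiv:1201.5703 — 2 statements merged into one kernel-verified Lean document; each statement's English description precedes it below -/
import Mathlib

section
/- For all positive integers p and q, the identity ∑_{c=1}^{p} c · C(p+q, p-c) · p^{p-c} · q^{q+c} = (pq/(p+q)) · C(p+q, q) · p^p · q^q holds. -/
/-!
Substituting `k = p - c`, the sum becomes the partial sum up to `k = p - 1` of
`∑ₖ (p - k) C(n, k) pᵏ qⁿ⁻ᵏ` with `n = p + q`. This telescopes: its `k`-th term is
`Tₖ - Tₖ₋₁` for `Tₖ = C(n - 1, k) pᵏ⁺¹ qⁿ⁻ᵏ`, because `p (n - k) - q k = n (p - k)`.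
So the sum equals `C(p + q - 1, p - 1) pᵖ q^(q+1)`, and `C(p + q - 1, p - 1) = p / (p + q) · C(p + q, p)`.
-/

open Finset

theorem sum_range_sub_mul_choose_mul_pow_mul_pow {R : Type*} [CommRing R] {x y : R} {n : ℕ}
    (hxy : x + y = n + 1) {m : ℕ} (hm : m ≤ n) :
    ∑ k ∈ range (m + 1), (x - k) * (n + 1).choose k * x ^ k * y ^ (n + 1 - k)
      = n.choose m * x ^ (m + 1) * y ^ (n + 1 - m) := by
  induction m with
  | zero => simp
  | succ m ih =>
    have hpascal : ((n + 1).choose (m + 1) : R) = n.choose m + n.choose (m + 1) := by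
      rw [Nat.choose_succ_succ]; push_cast; ring
    have habsorb : ((n.choose (m + 1) : ℕ) : R) * (m + 1) = n.choose m * (n - m) := by
      have := congrArg (Nat.cast : ℕ → R) (Nat.choose_succ_right_eq n m)
      push_cast [Nat.cast_sub (by omega : m ≤ n)] at this
      exact this
    have hy : y ^ (n + 1 - m) = y ^ (n - m) * y := by
      rw [← pow_succ]; congr 1; omega
    rw [sum_range_succ, ih (by omega), hy, Nat.add_sub_add_right]
    push_cast
    linear_combination (x - (m + 1)) * x ^ (m + 1) * y ^ (n - m) * hpascal
      - x ^ (m + 1) * y ^ (n - m) * habsorb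
      + n.choose m * x ^ (m + 1) * y ^ (n - m) * hxy

theorem stmt0_general (p q : ℕ) (hp : 0 < p) :
    ∑ c ∈ Finset.Icc 1 p,
        (c : ℚ) * ((p + q).choose (p - c) : ℚ) * (p : ℚ) ^ (p - c) * (q : ℚ) ^ (q + c)
      = ((p : ℚ) * q / (p + q)) * ((p + q).choose q : ℚ) * (p : ℚ) ^ p * (q : ℚ) ^ q := by
  obtain ⟨a, rfl⟩ : ∃ a, p = a + 1 := ⟨p - 1, by omega⟩
  have hreflect : ∑ c ∈ Icc 1 (a + 1), (c : ℚ) * ((a + 1 + q).choose (a + 1 - c) : ℚ)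
        * ((a + 1 : ℕ) : ℚ) ^ (a + 1 - c) * (q : ℚ) ^ (q + c)
      = ∑ k ∈ range (a + 1), (((a + 1 : ℕ) : ℚ) - k) * ((a + q + 1).choose k : ℚ)
        * ((a + 1 : ℕ) : ℚ) ^ k * (q : ℚ) ^ (a + q + 1 - k) := by
    refine sum_nbij' (a + 1 - ·) (a + 1 - ·) ?_ ?_ ?_ ?_ ?_ <;> simp only [mem_Icc, mem_range]
    iterate 4 intro c hc; omega
    intro c hc
    rw [show a + q + 1 - (a + 1 - c) = q + c by omega, Nat.cast_sub hc.2, sub_sub_cancel,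
      show a + 1 + q = a + q + 1 by ring]
  have habsorb : ((a + 1 + q : ℕ) : ℚ) * (a + q).choose a = (a + 1 + q).choose q * (a + 1 : ℕ) := by
    have := Nat.add_one_mul_choose_eq (a + q) a
    rw [show a + q + 1 = a + 1 + q by ring, Nat.choose_symm_add (a := a + 1)] at this
    exact_mod_cast this
  rw [hreflect, sum_range_sub_mul_choose_mul_pow_mul_pow (x := ((a + 1 : ℕ) : ℚ)) (y := q)
    (by push_cast; ring) (Nat.le_add_right a q), show a + q + 1 - a = q + 1 by omega]
  push_cast at habsorb ⊢
  field_simp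
  linear_combination (q : ℚ) ^ (q + 1) * habsorb

/-- Goulden–Jackson identity: `∑_{c=1}^{p} c·C(p+q,p-c)·p^{p-c}·q^{q+c}
    = (pq/(p+q))·C(p+q,q)·p^p·q^q`. -/
theorem stmt0 (p q : ℕ) (hp : 0 < p) (hq : 0 < q) :
    ∑ c ∈ Finset.Icc 1 p,
        (c : ℚ) * ((p + q).choose (p - c) : ℚ) * (p : ℚ) ^ (p - c) * (q : ℚ) ^ (q + c)
      = ((p : ℚ) * q / (p + q)) * ((p + q).choose q : ℚ) * (p : ℚ) ^ p * (q : ℚ) ^ q :=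
  stmt0_general p q hp
end

section
/- For all positive integers p and q, the quantity C(p+q, q) · p^p · q^q + ∑_{c=1}^{p} 2c · C(p+q, p-c) · p^{p-c} · q^{q+c} equals C(p+q, q) · p^p · q^q · (p+q+2pq)/(p+q). -/
/-!
With `f k = k * C(n, k) * x ^ k * y ^ (n + 1 - k)`, the identity `(k + 1) C(n, k + 1) = (n - k) C(n, k)`
gives `f (k + 1) - f k = C(n, k) x ^ k y ^ (n - k) ((n - k) x - k y)`, so these terms telescope.
For `x = p`, `y = q`, `n = p + q` the bracket is `n (p - k)`, hence
`∑_{k < p} (p - k) C(n, k) p ^ k q ^ (n - k) = (p q / n) C(n, q) p ^ p q ^ q`;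
substituting `k = p - c` turns the sum of the theorem into twice this one.
-/

open Finset

section Telescoping

variable {R : Type*} [CommRing R]

theorem choose_mul_pow_mul_sub_eq_sub (x y : R) {n k : ℕ} (hk : k ≤ n) :
    (n.choose k : R) * x ^ k * y ^ (n - k) * ((n - k : ℕ) * x - k * y) =
      (k + 1 : ℕ) * n.choose (k + 1) * x ^ (k + 1) * y ^ (n + 1 - (k + 1))
        - k * n.choose k * x ^ k * y ^ (n + 1 - k) := by
  have hchoose : ((n.choose (k + 1) * (k + 1) : ℕ) : R) = (n.choose k * (n - k) : ℕ) :=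
    congrArg _ (Nat.choose_succ_right_eq n k)
  rw [Nat.add_sub_add_right, Nat.sub_add_comm hk, pow_succ x k, pow_succ y (n - k)]
  push_cast at hchoose ⊢
  linear_combination -(x ^ k * x * y ^ (n - k)) * hchoose

theorem sum_range_choose_mul_pow_mul_sub (x y : R) {n m : ℕ} (hm : m ≤ n) :
    ∑ k ∈ range m, (n.choose k : R) * x ^ k * y ^ (n - k) * ((n - k : ℕ) * x - k * y) =
      m * n.choose m * x ^ m * y ^ (n + 1 - m) := by
  rw [sum_congr rfl fun k hk => choose_mul_pow_mul_sub_eq_sub x y (by grind),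
    sum_range_sub (fun k => (k : R) * n.choose k * x ^ k * y ^ (n + 1 - k))]
  simp

end Telescoping

theorem sum_range_sub_mul_choose_mul_pow {R : Type*} [CommRing R] (p q : ℕ) :
    ((p : R) + q) * ∑ k ∈ range p, ((p - k : ℕ) : R) * (p + q).choose k * p ^ k * q ^ (p + q - k) =
      p * q * (p + q).choose q * p ^ p * q ^ q := by
  calc _ = ∑ k ∈ range p, ((p + q).choose k : R) * p ^ k * q ^ (p + q - k)
        * ((p + q - k : ℕ) * p - k * q) := by
        rw [mul_sum]
        refine sum_congr rfl fun k hk => ?_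
        have hkp : k ≤ p := (mem_range.1 hk).le
        push_cast [Nat.cast_sub hkp, Nat.cast_sub (hkp.trans (Nat.le_add_right p q))]
        ring
    _ = _ := by
        rw [sum_range_choose_mul_pow_mul_sub _ _ (Nat.le_add_right p q), Nat.add_assoc,
          Nat.add_sub_cancel_left, Nat.choose_symm_add]
        ring

theorem sum_Icc_one_eq_sum_range_sub {M : Type*} [AddCommMonoid M] (f : ℕ → M) (p : ℕ) :
    ∑ c ∈ Icc 1 p, f c = ∑ k ∈ range p, f (p - k) :=
  sum_nbij' (p - ·) (p - ·) (by grind) (by grind) (by grind) (by grind) (by grind)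

theorem stmt1_general (p q : ℕ) (hp : 0 < p) :
    ((p + q).choose q : ℚ) * (p : ℚ) ^ p * (q : ℚ) ^ q
      + ∑ c ∈ Finset.Icc 1 p,
          2 * (c : ℚ) * ((p + q).choose (p - c) : ℚ) * (p : ℚ) ^ (p - c) * (q : ℚ) ^ (q + c)
      = ((p + q).choose q : ℚ) * (p : ℚ) ^ p * (q : ℚ) ^ q
          * (((p : ℚ) + q + 2 * p * q) / ((p : ℚ) + q)) := by
  have hn : (p : ℚ) + q ≠ 0 := by positivity
  have hterm : ∀ k ∈ range p,
      2 * ((p - k : ℕ) : ℚ) * ((p + q).choose (p - (p - k)) : ℚ) * (p : ℚ) ^ (p - (p - k))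
        * (q : ℚ) ^ (q + (p - k)) =
      2 * (((p - k : ℕ) : ℚ) * (p + q).choose k * p ^ k * q ^ (p + q - k)) := by
    intro k hk
    rw [Nat.sub_sub_self (mem_range.1 hk).le, show q + (p - k) = p + q - k by grind]
    ring
  rw [sum_Icc_one_eq_sum_range_sub, sum_congr rfl hterm, ← mul_sum]
  field_simp
  linear_combination 2 * sum_range_sub_mul_choose_mul_pow (R := ℚ) p q

theorem stmt1 (p q : ℕ) (hp : 0 < p) (hq : 0 < q) :
    ((p + q).choose q : ℚ) * (p : ℚ) ^ p * (q : ℚ) ^ q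
      + ∑ c ∈ Finset.Icc 1 p,
          2 * (c : ℚ) * ((p + q).choose (p - c) : ℚ) * (p : ℚ) ^ (p - c) * (q : ℚ) ^ (q + c)
      = ((p + q).choose q : ℚ) * (p : ℚ) ^ p * (q : ℚ) ^ q
          * (((p : ℚ) + q + 2 * p * q) / ((p : ℚ) + q)) :=
  stmt1_general p q hp
end
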